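/- arXiv:2311.08471 — 8 statements merged into one kernel-verified Lean document; each statement's English description precedes it below -/
import Mathlib

section
/- There is no preorder ≽ on Δ (the finite-support lotteries on ℝ²) that simultaneously satisfies Pareto, Converse Pareto, Expectationalism, and Negative Dominance. -/
open scoped BigOperators

noncomputable section

/-- A finite-support lottery on `X`. -/
structure Lottery (X : Type*) where
  val : X →₀ ℝ
  nonneg : ∀ x, 0 ≤ val x
  total : val.sum (fun _ p => p) = 1

namespace Lottery

variable {X : Type*}

/-- The point-mass lottery at `x`. -/
def delta (x : X) : Lottery X where
  val := Finsupp.single x 1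
  nonneg := fun y => by
    classical
    rw [Finsupp.single_apply]
    split <;> norm_num
  total := by
    rw [Finsupp.sum_single_index rfl]

/-- The mixture `α • f + (1 - α) • g`. -/
def mix (α : ℝ) (h1 : 0 ≤ α) (h2 : α ≤ 1) (f g : Lottery X) : Lottery X where
  val := α • f.val + (1 - α) • g.val
  nonneg := fun x => by
    have hf := f.nonneg x
    have hg := g.nonneg x
    simp only [Finsupp.coe_add, Finsupp.coe_smul, Pi.add_apply, Pi.smul_apply, smul_eq_mul]
    nlinarith
  total := by
    rw [Finsupp.sum_add_index' (fun _ => rfl) (fun _ _ _ => rfl)]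
    rw [Finsupp.sum_smul_index (fun _ => rfl), Finsupp.sum_smul_index (fun _ => rfl)]
    rw [← Finsupp.mul_sum, ← Finsupp.mul_sum, f.total, g.total]
    ring

/-- The uniform lottery on `a` and `b`, written `a/b` in the paper. -/
def unif (a b : X) : Lottery X := mix (1/2) (by norm_num) (by norm_num) (delta a) (delta b)

/-- Strict preference. -/
def SPref (R : Lottery X → Lottery X → Prop) (f g : Lottery X) : Prop := R f g ∧ ¬ R g f

/-- Indifference. -/
def Indiff (R : Lottery X → Lottery X → Prop) (f g : Lottery X) : Prop := R f g ∧ R g f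

/-- Incomparability. -/
def Incomp (R : Lottery X → Lottery X → Prop) (f g : Lottery X) : Prop := ¬ R f g ∧ ¬ R g f

/-- Negative Dominance. -/
def NegDominance (R : Lottery X → Lottery X → Prop) : Prop :=
  ∀ f g : Lottery X, SPref R f g →
    ∃ o ∈ f.val.support, ∃ o' ∈ g.val.support, SPref R (delta o) (delta o')

/-- Independence. -/
def Independence (R : Lottery X → Lottery X → Prop) : Prop :=
  ∀ f g h : Lottery X, ∀ α : ℝ, ∀ (h1 : 0 < α) (h2 : α < 1),
    (R f g ↔ R (mix α h1.le h2.le f h) (mix α h1.le h2.le g h))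

/-- The coordinatewise expectation of a lottery on `ℝ²`. -/
def expLot (f : Lottery (ℝ × ℝ)) : ℝ × ℝ :=
  (f.val.sum fun o p => p * o.1, f.val.sum fun o p => p * o.2)

/-- Pareto. -/
def Pareto (R : Lottery (ℝ × ℝ) → Lottery (ℝ × ℝ) → Prop) : Prop :=
  ∀ x y x' y' : ℝ, x' ≤ x → y' ≤ y → R (delta (x, y)) (delta (x', y'))

/-- Converse Pareto. -/
def ConvPareto (R : Lottery (ℝ × ℝ) → Lottery (ℝ × ℝ) → Prop) : Prop :=
  ∀ x y x' y' : ℝ, R (delta (x, y)) (delta (x', y')) → x' ≤ x ∧ y' ≤ y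

/-- Two outcomes are unidimensional with each other if they differ in at most one coordinate. -/
def UniWith {A B : Type*} (o o' : A × B) : Prop := o.1 = o'.1 ∨ o.2 = o'.2

/-- A lottery is unidimensional if any two outcomes in its support are unidimensional
with each other. -/
def Unidim {A B : Type*} (f : Lottery (A × B)) : Prop :=
  ∀ o ∈ f.val.support, ∀ o' ∈ f.val.support, UniWith o o'

/-- Expectationalism. -/
def Expectationalism (R : Lottery (ℝ × ℝ) → Lottery (ℝ × ℝ) → Prop) : Prop :=
  ∀ f, Indiff R f (delta (expLot f))

/-- Unidimensional Expectations. -/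
def UnidimExp (R : Lottery (ℝ × ℝ) → Lottery (ℝ × ℝ) → Prop) : Prop :=
  ∀ f, Unidim f → Indiff R f (delta (expLot f))

end Lottery

open Lottery

/-- There is no preorder on Δ satisfying Pareto, Converse Pareto,
Expectationalism, and Negative Dominance. -/
theorem statement0 :
    ¬ ∃ R : Lottery (ℝ × ℝ) → Lottery (ℝ × ℝ) → Prop,
      Reflexive R ∧ Transitive R ∧ Pareto R ∧ ConvPareto R ∧
      Expectationalism R ∧ NegDominance R := by
  rintro ⟨R, hrefl, htrans, hpar, hconv, hexp, hnd⟩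
  set f : Lottery (ℝ × ℝ) := unif (1, 0) (0, 1) with hf
  have hexpf : expLot f = (1/2, 1/2) := by
    have hv : f.val = Finsupp.single ((1:ℝ),(0:ℝ)) (1/2) + Finsupp.single ((0:ℝ),(1:ℝ)) (1/2) := by
      simp only [hf, unif, mix, delta, Finsupp.smul_single, smul_eq_mul, mul_one]
      norm_num
    simp only [expLot, hv]
    rw [Prod.mk.injEq]
    constructor <;>
      rw [Finsupp.sum_add_index' (by simp) (fun a b c => add_mul b c _),
        Finsupp.sum_single_index (by simp), Finsupp.sum_single_index (by simp)] <;>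
      norm_num
  have h1 : Indiff R f (delta (1/2, 1/2)) := by
    have := hexp f
    rwa [hexpf] at this
  have h2 : R (delta ((1:ℝ)/2, (1:ℝ)/2)) (delta (1/4, 1/4)) :=
    hpar _ _ _ _ (by norm_num) (by norm_num)
  have hfg : SPref R f (delta (1/4, 1/4)) := by
    refine ⟨htrans h1.1 h2, fun h => ?_⟩
    have := hconv _ _ _ _ (htrans h h1.1)
    linarith [this.1]
  obtain ⟨o, ho, o', ho', hso⟩ := hnd f _ hfg
  have hsupp : o = ((1:ℝ), (0:ℝ)) ∨ o = ((0:ℝ), (1:ℝ)) := by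
    by_contra hc
    push_neg at hc
    rw [Finsupp.mem_support_iff] at ho
    apply ho
    simp [hf, unif, mix, delta, Finsupp.single_apply, hc.1, hc.2,
      Ne.symm hc.1, Ne.symm hc.2]
  have ho'eq : o' = ((1:ℝ)/4, (1:ℝ)/4) := by
    have : o' ∈ ({(((1:ℝ)/4, (1:ℝ)/4))} : Finset (ℝ × ℝ)) := by
      simpa [delta, Finsupp.support_single_ne_zero] using ho'
    exact Finset.mem_singleton.mp this
  rw [ho'eq] at hso
  have hR := hso.1
  rcases hsupp with h | h <;> rw [h] at hR <;>
    · have := hconv _ _ _ _ hR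
      linarith [this.1, this.2]
end
end

section
/- There is no preorder ≽ on Δ that simultaneously satisfies Pareto, Converse Pareto, Unidimensional Expectations, Independence, and Negative Dominance. -/
open scoped BigOperators

noncomputable section

open Lottery

/-! ### Auxiliary lemmas -/

lemma lot_ext {X : Type*} {f g : Lottery X} (h : f.val = g.val) : f = g := by
  cases f; cases g; subst h; rfl

lemma mix_delta_val {X : Type*} (α : ℝ) (h1 : 0 ≤ α) (h2 : α ≤ 1) (a b : X) :
    (mix α h1 h2 (delta a) (delta b)).val
      = Finsupp.single a α + Finsupp.single b (1 - α) := by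
  show α • Finsupp.single a (1:ℝ) + (1 - α) • Finsupp.single b (1:ℝ) = _
  rw [Finsupp.smul_single, Finsupp.smul_single, smul_eq_mul, smul_eq_mul, mul_one, mul_one]

lemma mem_supp_mix_delta {X : Type*} {α : ℝ} {h1 : 0 ≤ α} {h2 : α ≤ 1} {a b x : X}
    (hx : x ∈ (mix α h1 h2 (delta a) (delta b)).val.support) : x = a ∨ x = b := by
  classical
  rw [mix_delta_val] at hx
  rcases Finset.mem_union.mp (Finsupp.support_add hx) with h | h
  · exact Or.inl (Finset.mem_singleton.mp (Finsupp.support_single_subset h))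
  · exact Or.inr (Finset.mem_singleton.mp (Finsupp.support_single_subset h))

lemma mem_supp_delta {X : Type*} {a x : X} (hx : x ∈ (delta a).val.support) : x = a := by
  classical
  exact Finset.mem_singleton.mp (Finsupp.support_single_subset hx)

lemma unidim_mix_delta {A B : Type*} {α : ℝ} {h1 : 0 ≤ α} {h2 : α ≤ 1} {a b : A × B}
    (hu : UniWith a b) : Unidim (mix α h1 h2 (delta a) (delta b)) := by
  intro o ho o' ho'
  rcases mem_supp_mix_delta ho with rfl | rfl <;> rcases mem_supp_mix_delta ho' with rfl | rfl
  · exact Or.inl rfl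
  · exact hu
  · rcases hu with h | h
    · exact Or.inl h.symm
    · exact Or.inr h.symm
  · exact Or.inl rfl

lemma expLot_mix_delta (α : ℝ) (h1 : 0 ≤ α) (h2 : α ≤ 1) (a b : ℝ × ℝ) :
    expLot (mix α h1 h2 (delta a) (delta b))
      = (α * a.1 + (1 - α) * b.1, α * a.2 + (1 - α) * b.2) := by
  have hs : ∀ φ : ℝ × ℝ → ℝ,
      ((Finsupp.single a α + Finsupp.single b (1 - α)).sum fun o p => p * φ o)
        = α * φ a + (1 - α) * φ b := by
    intro φ
    rw [Finsupp.sum_add_index' (fun o => zero_mul (φ o))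
        (fun o b₁ b₂ => add_mul b₁ b₂ (φ o)),
      Finsupp.sum_single_index (zero_mul (φ a)), Finsupp.sum_single_index (zero_mul (φ b))]
  show ((mix α h1 h2 (delta a) (delta b)).val.sum fun o p => p * o.1,
        (mix α h1 h2 (delta a) (delta b)).val.sum fun o p => p * o.2) = _
  rw [mix_delta_val, hs, hs]

/-- There is no preorder on Δ satisfying Pareto, Converse Pareto,
Unidimensional Expectations, Independence, and Negative Dominance. -/
theorem statement1 :
    ¬ ∃ R : Lottery (ℝ × ℝ) → Lottery (ℝ × ℝ) → Prop,
      Reflexive R ∧ Transitive R ∧ Pareto R ∧ ConvPareto R ∧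
      UnidimExp R ∧ Independence R ∧ NegDominance R := by
  rintro ⟨R, -, htrans, hpar, hconv, hUE, hind, hND⟩
  have w2 : (0:ℝ) < 1/2 := by norm_num
  have w2' : (1/2:ℝ) < 1 := by norm_num
  have w3 : (0:ℝ) < 1/3 := by norm_num
  have w3' : (1/3:ℝ) < 1 := by norm_num
  have w4 : (0:ℝ) < 1/4 := by norm_num
  have w4' : (1/4:ℝ) < 1 := by norm_num
  have wq : (0:ℝ) < 3/4 := by norm_num
  have wq' : (3/4:ℝ) < 1 := by norm_num
  -- L1 := ½δ(1,1)+½δ(1,-1) ~ δ(1,0)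
  have hL1 : Indiff R (mix (1/2) w2.le w2'.le (delta ((1:ℝ),(1:ℝ))) (delta (1,-1)))
      (delta (1,0)) := by
    have hu : Unidim (mix (1/2) w2.le w2'.le (delta ((1:ℝ),(1:ℝ))) (delta (1,-1))) :=
      unidim_mix_delta (Or.inl rfl)
    have he : expLot (mix (1/2) w2.le w2'.le (delta ((1:ℝ),(1:ℝ))) (delta (1,-1)))
        = ((1:ℝ),(0:ℝ)) := by
      rw [expLot_mix_delta]; norm_num
    have h := hUE _ hu
    rwa [he] at h
  -- G ≽ X1 := ½L1 + ½δ(0,1)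
  have hGX1 : R (mix (1/2) w2.le w2'.le (delta ((1:ℝ),(0:ℝ))) (delta (0,1)))
      (mix (1/2) w2.le w2'.le
        (mix (1/2) w2.le w2'.le (delta ((1:ℝ),(1:ℝ))) (delta (1,-1))) (delta (0,1))) :=
    (hind _ _ _ (1/2) w2 w2').mp hL1.2
  -- X1 = X1' := ¾U + ¼δ(1,-1),  U := ⅓δ(1,1)+⅔δ(0,1)
  have hX1eq : (mix (1/2) w2.le w2'.le
        (mix (1/2) w2.le w2'.le (delta ((1:ℝ),(1:ℝ))) (delta (1,-1))) (delta (0,1)))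
      = mix (3/4) wq.le wq'.le
          (mix (1/3) w3.le w3'.le (delta ((1:ℝ),(1:ℝ))) (delta (0,1))) (delta (1,-1)) := by
    apply lot_ext
    show (1/2 : ℝ) • ((1/2 : ℝ) • Finsupp.single ((1:ℝ),(1:ℝ)) (1:ℝ)
            + (1 - 1/2 : ℝ) • Finsupp.single ((1:ℝ),(-1:ℝ)) (1:ℝ))
          + (1 - 1/2 : ℝ) • Finsupp.single ((0:ℝ),(1:ℝ)) (1:ℝ)
        = (3/4 : ℝ) • ((1/3 : ℝ) • Finsupp.single ((1:ℝ),(1:ℝ)) (1:ℝ)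
            + (1 - 1/3 : ℝ) • Finsupp.single ((0:ℝ),(1:ℝ)) (1:ℝ))
          + (1 - 3/4 : ℝ) • Finsupp.single ((1:ℝ),(-1:ℝ)) (1:ℝ)
    ext x
    simp only [Finsupp.coe_add, Finsupp.coe_smul, Pi.add_apply, Pi.smul_apply,
      smul_eq_mul, Finsupp.single_apply]
    split_ifs <;> norm_num
  rw [hX1eq] at hGX1
  -- U ~ δ(1/3, 1)
  have hU : Indiff R (mix (1/3) w3.le w3'.le (delta ((1:ℝ),(1:ℝ))) (delta (0,1)))
      (delta (1/3,1)) := by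
    have hu : Unidim (mix (1/3) w3.le w3'.le (delta ((1:ℝ),(1:ℝ))) (delta (0,1))) :=
      unidim_mix_delta (Or.inr rfl)
    have he : expLot (mix (1/3) w3.le w3'.le (delta ((1:ℝ),(1:ℝ))) (delta (0,1)))
        = ((1/3:ℝ),(1:ℝ)) := by
      rw [expLot_mix_delta]; norm_num
    have h := hUE _ hu
    rwa [he] at h
  -- X1' ≽ X2 := ¾δ(1/3,1) + ¼δ(1,-1)
  have hX1X2 : R (mix (3/4) wq.le wq'.le
        (mix (1/3) w3.le w3'.le (delta ((1:ℝ),(1:ℝ))) (delta (0,1))) (delta (1,-1)))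
      (mix (3/4) wq.le wq'.le (delta ((1/3:ℝ),(1:ℝ))) (delta (1,-1))) :=
    (hind _ _ _ (3/4) wq wq').mp hU.1
  -- X2 = X2' := ¼δ(1,-1) + ¾δ(1/3,1)
  have hX2eq : mix (3/4) wq.le wq'.le (delta ((1/3:ℝ),(1:ℝ))) (delta (1,-1))
      = mix (1/4) w4.le w4'.le (delta ((1:ℝ),(-1:ℝ))) (delta (1/3,1)) := by
    apply lot_ext
    rw [mix_delta_val, mix_delta_val]
    ext x
    simp only [Finsupp.coe_add, Pi.add_apply, Finsupp.single_apply]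
    split_ifs <;> norm_num
  rw [hX2eq] at hX1X2
  -- δ(1,-1) ≽ δ(1/3,-1), hence X2' ≽ Y' := ¼δ(1/3,-1) + ¾δ(1/3,1)
  have hpm : R (delta ((1:ℝ),(-1:ℝ))) (delta (1/3,-1)) :=
    hpar 1 (-1) (1/3) (-1) (by norm_num) le_rfl
  have hX2Y : R (mix (1/4) w4.le w4'.le (delta ((1:ℝ),(-1:ℝ))) (delta (1/3,1)))
      (mix (1/4) w4.le w4'.le (delta ((1/3:ℝ),(-1:ℝ))) (delta (1/3,1))) :=
    (hind _ _ _ (1/4) w4 w4').mp hpm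
  -- Y' ~ δ(1/3, 1/2)
  have hY : Indiff R (mix (1/4) w4.le w4'.le (delta ((1/3:ℝ),(-1:ℝ))) (delta (1/3,1)))
      (delta (1/3,1/2)) := by
    have hu : Unidim (mix (1/4) w4.le w4'.le (delta ((1/3:ℝ),(-1:ℝ))) (delta (1/3,1))) :=
      unidim_mix_delta (Or.inl rfl)
    have he : expLot (mix (1/4) w4.le w4'.le (delta ((1/3:ℝ),(-1:ℝ))) (delta (1/3,1)))
        = ((1/3:ℝ),(1/2:ℝ)) := by
      rw [expLot_mix_delta]; norm_num
    have h := hUE _ hu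
    rwa [he] at h
  -- G ≽ δ(1/3,1/2) ≽ δ(1/3,1/3)
  have hGqh : R (mix (1/2) w2.le w2'.le (delta ((1:ℝ),(0:ℝ))) (delta (0,1)))
      (delta (1/3,1/2)) :=
    htrans (htrans (htrans hGX1 hX1X2) hX2Y) hY.1
  have hGqt : R (mix (1/2) w2.le w2'.le (delta ((1:ℝ),(0:ℝ))) (delta (0,1)))
      (delta (1/3,1/3)) :=
    htrans hGqh (hpar (1/3) (1/2) (1/3) (1/3) le_rfl (by norm_num))
  -- Negative Dominance forces δ(1/3,1/3) ≽ G
  have hqtG : R (delta ((1/3:ℝ),(1/3:ℝ)))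
      (mix (1/2) w2.le w2'.le (delta ((1:ℝ),(0:ℝ))) (delta (0,1))) := by
    by_contra hnot
    obtain ⟨o, ho, o', ho', hso⟩ := hND _ _ ⟨hGqt, hnot⟩
    have ho2 := mem_supp_delta ho'
    subst ho2
    obtain ⟨ox, oy⟩ := o
    have hcp := hconv ox oy (1/3) (1/3) hso.1
    rcases mem_supp_mix_delta ho with h | h <;> rw [Prod.mk.injEq] at h <;>
      obtain ⟨rfl, rfl⟩ := h
    · exact absurd hcp.2 (by norm_num)
    · exact absurd hcp.1 (by norm_num)
  -- Contradiction with Converse Pareto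
  have hfinal := hconv (1/3) (1/3) (1/3) (1/2) (htrans hqtG hGqh)
  exact absurd hfinal.2 (by norm_num)
end
end

section
/- There is no preorder ≽ on Δ that simultaneously satisfies Pareto, Converse Pareto, Strict Betweenness, Certainty Equivalents, Dimensional Separability, and Negative Dominance. -/
open scoped BigOperators

noncomputable section

open Lottery

open Classical in
/-- The first marginal of a lottery on ℝ². -/
noncomputable def marg1 (f : Lottery (ℝ × ℝ)) : ℝ → ℝ := fun x =>
  ∑ o ∈ f.val.support.filter (fun o => o.1 = x), f.val o

open Classical in
/-- The second marginal of a lottery on ℝ². -/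
noncomputable def marg2 (f : Lottery (ℝ × ℝ)) : ℝ → ℝ := fun y =>
  ∑ o ∈ f.val.support.filter (fun o => o.2 = y), f.val o

/-- Strict Betweenness. -/
def StrictBetweenness (R : Lottery (ℝ × ℝ) → Lottery (ℝ × ℝ) → Prop) : Prop :=
  ∀ f : Lottery (ℝ × ℝ), Unidim f →
    (∃ a ∈ f.val.support, ∃ b ∈ f.val.support, SPref R (delta a) (delta b)) →
    ∀ o : ℝ × ℝ, Indiff R f (delta o) →
      ∃ c ∈ f.val.support, ∃ d ∈ f.val.support,
        SPref R (delta c) (delta o) ∧ SPref R (delta o) (delta d)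

/-- Certainty Equivalents. -/
def CertEquiv (R : Lottery (ℝ × ℝ) → Lottery (ℝ × ℝ) → Prop) : Prop :=
  ∀ f : Lottery (ℝ × ℝ), ∃ o : ℝ × ℝ, Indiff R f (delta o)

/-- Dimensional Separability. -/
def DimSep (R : Lottery (ℝ × ℝ) → Lottery (ℝ × ℝ) → Prop) : Prop :=
  ∀ f g : Lottery (ℝ × ℝ), ∀ o o' : ℝ × ℝ,
    Indiff R f (delta o) → Indiff R g (delta o') →
      (marg1 f = marg1 g → o.1 = o'.1) ∧ (marg2 f = marg2 g → o.2 = o'.2)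

section Aux

lemma unif_val {X : Type*} (a b : X) :
    (unif a b).val = Finsupp.single a (1/2 : ℝ) + Finsupp.single b (1/2 : ℝ) := by
  classical
  show ((1:ℝ)/2) • Finsupp.single a (1:ℝ) + (1 - 1/2) • Finsupp.single b (1:ℝ) = _
  rw [Finsupp.smul_single, Finsupp.smul_single]
  norm_num

lemma mem_support_unif {X : Type*} {a b o : X} (h : o ∈ (unif a b).val.support) :
    o = a ∨ o = b := by
  classical
  rw [unif_val] at h
  rcases Finset.mem_union.1 (Finsupp.support_add h) with h' | h'
  · exact Or.inl (Finset.mem_singleton.1 (Finsupp.support_single_subset h'))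
  · exact Or.inr (Finset.mem_singleton.1 (Finsupp.support_single_subset h'))

lemma unif_apply {X : Type*} [DecidableEq X] (a b o : X) :
    (unif a b).val o = (if a = o then (1/2:ℝ) else 0) + (if b = o then (1/2:ℝ) else 0) := by
  rw [unif_val]
  simp [Finsupp.single_apply]

lemma marg1_sum (f : Lottery (ℝ × ℝ)) (x : ℝ) :
    marg1 f x = f.val.sum (fun o p => if o.1 = x then p else 0) := by
  classical
  rw [Finsupp.sum]
  show ∑ o ∈ f.val.support.filter (fun o => o.1 = x), f.val o = _
  rw [Finset.sum_filter]

lemma marg2_sum (f : Lottery (ℝ × ℝ)) (y : ℝ) :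
    marg2 f y = f.val.sum (fun o p => if o.2 = y then p else 0) := by
  classical
  rw [Finsupp.sum]
  show ∑ o ∈ f.val.support.filter (fun o => o.2 = y), f.val o = _
  rw [Finset.sum_filter]

lemma marg1_unif (a b : ℝ × ℝ) (x : ℝ) :
    marg1 (unif a b) x = (if a.1 = x then (1/2:ℝ) else 0) + (if b.1 = x then (1/2:ℝ) else 0) := by
  classical
  rw [marg1_sum, unif_val,
    Finsupp.sum_add_index' (fun _ => by simp) (fun o p q => by split <;> simp),
    Finsupp.sum_single_index (by simp), Finsupp.sum_single_index (by simp)]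

lemma marg2_unif (a b : ℝ × ℝ) (y : ℝ) :
    marg2 (unif a b) y = (if a.2 = y then (1/2:ℝ) else 0) + (if b.2 = y then (1/2:ℝ) else 0) := by
  classical
  rw [marg2_sum, unif_val,
    Finsupp.sum_add_index' (fun _ => by simp) (fun o p q => by split <;> simp),
    Finsupp.sum_single_index (by simp), Finsupp.sum_single_index (by simp)]

lemma marg1_delta (a : ℝ × ℝ) (x : ℝ) :
    marg1 (delta a) x = (if a.1 = x then (1:ℝ) else 0) := by
  classical
  rw [marg1_sum]
  show Finsupp.sum (Finsupp.single a (1:ℝ)) _ = _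
  rw [Finsupp.sum_single_index (by simp)]

lemma marg2_delta (a : ℝ × ℝ) (y : ℝ) :
    marg2 (delta a) y = (if a.2 = y then (1:ℝ) else 0) := by
  classical
  rw [marg2_sum]
  show Finsupp.sum (Finsupp.single a (1:ℝ)) _ = _
  rw [Finsupp.sum_single_index (by simp)]

lemma mem_support_delta {X : Type*} {a o : X} (h : o ∈ (delta a).val.support) : o = a := by
  classical
  have : o ∈ (Finsupp.single a (1:ℝ)).support := h
  exact Finset.mem_singleton.1 (Finsupp.support_single_subset this)

end Aux

/-- There is no preorder on Δ satisfying Pareto, Converse Pareto,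
Strict Betweenness, Certainty Equivalents, Dimensional Separability, and
Negative Dominance. -/
theorem statement3 :
    ¬ ∃ R : Lottery (ℝ × ℝ) → Lottery (ℝ × ℝ) → Prop,
      Reflexive R ∧ Transitive R ∧ Pareto R ∧ ConvPareto R ∧
      StrictBetweenness R ∧ CertEquiv R ∧ DimSep R ∧ NegDominance R := by
  rintro ⟨R, hrefl, htrans, hP, hCP, hSB, hCE, hDS, hND⟩
  classical
  -- strict preference between point masses from strict dominance
  have sp : ∀ x y x' y' : ℝ, x' ≤ x → y' ≤ y → (x' < x ∨ y' < y) →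
      SPref R (delta (x, y)) (delta (x', y')) := by
    intro x y x' y' h1 h2 h3
    refine ⟨hP _ _ _ _ h1 h2, fun h => ?_⟩
    rcases hCP _ _ _ _ h with ⟨hx, hy⟩
    rcases h3 with h3 | h3 <;> linarith
  -- first auxiliary lottery : uniform on (0,0),(1,0)
  have key : ∀ p q : ℝ × ℝ, p.2 = q.2 → p.1 = 0 → q.1 = 1 → p.2 = 0 →
      ∀ o1 : ℝ × ℝ, Indiff R (unif p q) (delta o1) → 0 < o1.1 ∧ o1.2 = 0 := by
    intro p q hpq hp1 hq1 hp2 o1 ho1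
    have hq2 : q.2 = 0 := hpq ▸ hp2
    have hpne : p ≠ q := by
      intro h; rw [h] at hp1; rw [hp1] at hq1; norm_num at hq1
    have memp : p ∈ (unif p q).val.support := by
      rw [Finsupp.mem_support_iff, unif_apply]
      simp [hpne, Ne.symm hpne]
    have memq : q ∈ (unif p q).val.support := by
      rw [Finsupp.mem_support_iff, unif_apply]
      simp [hpne, Ne.symm hpne]
    have huni : Unidim (unif p q) := by
      intro o ho o' ho'
      rcases mem_support_unif ho with h | h <;> rcases mem_support_unif ho' with h' | h' <;>
        subst h <;> subst h' <;>
          first | exact Or.inr rfl | exact Or.inr hpq | exact Or.inr hpq.symm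
    -- second coordinate of CE is 0
    have hmarg2 : marg2 (unif p q) = marg2 (delta ((0:ℝ), (0:ℝ))) := by
      funext y
      rw [marg2_unif, marg2_delta, hp2, hq2]
      norm_num
      split_ifs <;> norm_num
    have ho12 : o1.2 = 0 :=
      (hDS (unif p q) (delta ((0:ℝ),(0:ℝ))) o1 ((0:ℝ),(0:ℝ)) ho1 ⟨hrefl _, hrefl _⟩).2 hmarg2
    -- strict betweenness
    have hqp : SPref R (delta q) (delta p) := by
      have := sp 1 0 0 0 (by norm_num) le_rfl (Or.inl (by norm_num))
      have hq : q = (1, 0) := by ext <;> simp [hq1, hq2]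
      have hp : p = (0, 0) := by ext <;> simp [hp1, hp2]
      rw [hq, hp]; exact this
    obtain ⟨c, hc, d, hd, hco, hod⟩ :=
      hSB (unif p q) huni ⟨q, memq, p, memp, hqp⟩ o1 ho1
    have hd12 : d.1 ≤ o1.1 ∧ d.2 ≤ o1.2 := hCP o1.1 o1.2 d.1 d.2 hod.1
    have ho11 : 0 < o1.1 := by
      rcases mem_support_unif hd with h | h
      · -- d = p = (0,0)
        by_contra hle
        push_neg at hle
        exact hod.2 (hP d.1 d.2 o1.1 o1.2 (by rw [h, hp1]; linarith)
          (by rw [h, hp2, ho12]))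
      · rw [h] at hd12; rw [hq1] at hd12; linarith [hd12.1]
    exact ⟨ho11, ho12⟩
  -- apply to the two unidimensional lotteries
  obtain ⟨o1, ho1⟩ := hCE (unif ((0:ℝ),(0:ℝ)) ((1:ℝ),(0:ℝ)))
  obtain ⟨ha, _⟩ := key ((0:ℝ),(0:ℝ)) ((1:ℝ),(0:ℝ)) rfl rfl rfl rfl o1 ho1
  -- second lottery: uniform on (0,0),(0,1); use a swapped version of key by symmetry
  obtain ⟨o2, ho2⟩ := hCE (unif ((0:ℝ),(0:ℝ)) ((0:ℝ),(1:ℝ)))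
  -- prove 0 < o2.2 directly (mirror argument)
  have hb : 0 < o2.2 := by
    have hmarg1 : marg1 (unif ((0:ℝ),(0:ℝ)) ((0:ℝ),(1:ℝ))) = marg1 (delta ((0:ℝ), (0:ℝ))) := by
      funext x
      rw [marg1_unif, marg1_delta]
      norm_num
      split_ifs <;> norm_num
    have ho21 : o2.1 = 0 :=
      (hDS _ (delta ((0:ℝ),(0:ℝ))) o2 ((0:ℝ),(0:ℝ)) ho2 ⟨hrefl _, hrefl _⟩).1 hmarg1
    have memp : ((0:ℝ),(0:ℝ)) ∈ (unif ((0:ℝ),(0:ℝ)) ((0:ℝ),(1:ℝ))).val.support := by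
      rw [Finsupp.mem_support_iff, unif_apply]
      norm_num [Prod.ext_iff]
    have memq : ((0:ℝ),(1:ℝ)) ∈ (unif ((0:ℝ),(0:ℝ)) ((0:ℝ),(1:ℝ))).val.support := by
      rw [Finsupp.mem_support_iff, unif_apply]
      norm_num [Prod.ext_iff]
    have huni : Unidim (unif ((0:ℝ),(0:ℝ)) ((0:ℝ),(1:ℝ))) := by
      intro o ho o' ho'
      rcases mem_support_unif ho with h | h <;> rcases mem_support_unif ho' with h' | h' <;>
        subst h <;> subst h' <;> exact Or.inl rfl
    have hqp : SPref R (delta ((0:ℝ),(1:ℝ))) (delta ((0:ℝ),(0:ℝ))) :=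
      sp 0 1 0 0 le_rfl (by norm_num) (Or.inr (by norm_num))
    obtain ⟨c, hc, d, hd, hco, hod⟩ :=
      hSB _ huni ⟨((0:ℝ),(1:ℝ)), memq, ((0:ℝ),(0:ℝ)), memp, hqp⟩ o2 ho2
    have hd12 : d.1 ≤ o2.1 ∧ d.2 ≤ o2.2 := hCP o2.1 o2.2 d.1 d.2 hod.1
    rcases mem_support_unif hd with h | h
    · by_contra hle
      push_neg at hle
      exact hod.2 (hP d.1 d.2 o2.1 o2.2 (by rw [h]; simp [ho21]) (by rw [h]; simpa using hle))
    · rw [h] at hd12; simp at hd12; linarith [hd12.2]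
  -- the diagonal lottery
  obtain ⟨o, ho⟩ := hCE (unif ((1:ℝ),(0:ℝ)) ((0:ℝ),(1:ℝ)))
  have ho1' : o.1 = o1.1 := by
    refine (hDS _ _ o o1 ho ho1).1 ?_
    funext x
    rw [marg1_unif, marg1_unif]
    norm_num
    try exact add_comm _ _
  have ho2' : o.2 = o2.2 := by
    refine (hDS _ _ o o2 ho ho2).2 ?_
    funext y
    rw [marg2_unif, marg2_unif]
    try norm_num
  have hoa : 0 < o.1 := ho1' ▸ ha
  have hob : 0 < o.2 := ho2' ▸ hb
  -- strict preference for mixture over a strictly dominated point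
  have hspref : SPref R (unif ((1:ℝ),(0:ℝ)) ((0:ℝ),(1:ℝ))) (delta (o.1/2, o.2/2)) := by
    constructor
    · exact htrans ho.1 (hP o.1 o.2 (o.1/2) (o.2/2) (by linarith) (by linarith))
    · intro h
      have := hCP (o.1/2) (o.2/2) o.1 o.2 (htrans h ho.1)
      linarith [this.1]
  obtain ⟨w, hw, w', hw', hsp⟩ := hND _ _ hspref
  have hw'' : w' = (o.1/2, o.2/2) := mem_support_delta hw'
  subst hw''
  have hle : o.1/2 ≤ w.1 ∧ o.2/2 ≤ w.2 := hCP w.1 w.2 (o.1/2) (o.2/2) hsp.1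
  rcases mem_support_unif hw with h | h <;> rw [h] at hle <;> simp at hle
  · linarith [hle.2]
  · linarith [hle.1]
end
end

section
/- For every real k > 6, there is no preorder ≽ on Δ that simultaneously satisfies Pareto, Converse Pareto, Independence, Negative Dominance, and k-incomparability. -/
open scoped BigOperators

noncomputable section

open Lottery

/-- k-incomparability. -/
def KIncomp (R : Lottery (ℝ × ℝ) → Lottery (ℝ × ℝ) → Prop) (k : ℝ) : Prop :=
  (∀ a₁ b₁ y c₁ : ℝ, a₁ ≠ b₁ →
    ((c₁ ≤ (a₁ + b₁) / 2 - |a₁ - b₁| / k →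
        SPref R (unif (a₁, y) (b₁, y)) (delta (c₁, y))) ∧
     ((a₁ + b₁) / 2 + |a₁ - b₁| / k ≤ c₁ →
        SPref R (delta (c₁, y)) (unif (a₁, y) (b₁, y))) ∧
     (|c₁ - (a₁ + b₁) / 2| < |a₁ - b₁| / (4 * k) →
        Incomp R (delta (c₁, y)) (unif (a₁, y) (b₁, y))))) ∧
  (∀ a₂ b₂ x c₂ : ℝ, a₂ ≠ b₂ →
    ((c₂ ≤ (a₂ + b₂) / 2 - |a₂ - b₂| / k →
        SPref R (unif (x, a₂) (x, b₂)) (delta (x, c₂))) ∧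
     ((a₂ + b₂) / 2 + |a₂ - b₂| / k ≤ c₂ →
        SPref R (delta (x, c₂)) (unif (x, a₂) (x, b₂))) ∧
     (|c₂ - (a₂ + b₂) / 2| < |a₂ - b₂| / (4 * k) →
        Incomp R (delta (x, c₂)) (unif (x, a₂) (x, b₂)))))

namespace Lottery

lemma ext' {X : Type*} {f g : Lottery X} (h : f.val = g.val) : f = g := by
  cases f; cases g; cases h; rfl

/-- Half-half mixture with fixed proofs. -/
def mix2 {X : Type*} (f g : Lottery X) : Lottery X :=
  mix (1/2) one_half_pos.le one_half_lt_one.le f g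

lemma mix2_val {X : Type*} (f g : Lottery X) :
    (mix2 f g).val = (1/2 : ℝ) • f.val + (1/2 : ℝ) • g.val := by
  show (1/2 : ℝ) • f.val + (1 - 1/2 : ℝ) • g.val = _
  norm_num

lemma unif_eq_mix2 {X : Type*} (a b : X) : unif a b = mix2 (delta a) (delta b) := rfl

lemma mix2_comm {X : Type*} (f g : Lottery X) : mix2 f g = mix2 g f := by
  apply ext'
  rw [mix2_val, mix2_val]
  abel

end Lottery

/-- For every real `k > 6`, there is no preorder on Δ satisfying Pareto,
Converse Pareto, Independence, Negative Dominance, and k-incomparability. -/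
theorem statement8 (k : ℝ) (hk : 6 < k) :
    ¬ ∃ R : Lottery (ℝ × ℝ) → Lottery (ℝ × ℝ) → Prop,
      Reflexive R ∧ Transitive R ∧ Pareto R ∧ ConvPareto R ∧
      Independence R ∧ NegDominance R ∧ KIncomp R k := by
  rintro ⟨R, -, htrans, hpar, hconv, hindep, hnd, hkx, hky⟩
  have k0 : (0:ℝ) < k := by linarith
  have hik : 1/k < 1/6 := by
    rw [div_lt_div_iff₀ k0 (by norm_num : (0:ℝ) < 6)]; linarith
  have hik0 : 0 < 1/k := by positivity
  set p : ℝ := 1/2 + 1/k with hp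
  set q : ℝ := 1/2 - 1/k with hq
  have hq0 : 0 < q := by rw [hq]; linarith
  have hp0 : 0 < p := by rw [hp]; linarith
  set cs : ℝ := (-p + 5*q)/2 - (p + 5*q)/k with hcs
  have hcs0 : 0 < cs := by
    have h1 : cs = ((k - 6) * k + 4) / (k*k) := by
      rw [hcs, hp, hq]; field_simp; ring
    have hnum : (0:ℝ) < (k - 6) * k + 4 := by nlinarith
    rw [h1]; exact div_pos hnum (by positivity)
  -- independence transfer
  have indR : ∀ f g h : Lottery (ℝ×ℝ), R f g → R (mix2 f h) (mix2 g h) :=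
    fun f g h hfg => (hindep f g h (1/2) one_half_pos one_half_lt_one).mp hfg
  have indS : ∀ f g h : Lottery (ℝ×ℝ), SPref R f g → SPref R (mix2 f h) (mix2 g h) :=
    fun f g h hfg =>
      ⟨indR f g h hfg.1,
       fun hc => hfg.2 ((hindep g f h (1/2) one_half_pos one_half_lt_one).mpr hc)⟩
  have rSTrans : ∀ {a b c : Lottery (ℝ×ℝ)}, R a b → SPref R b c → SPref R a c :=
    fun hab hbc => ⟨htrans hab hbc.1, fun hca => hbc.2 (htrans hca hab)⟩
  -- lotteries in the chain
  set H1 : Lottery (ℝ×ℝ) := mix2 (delta (-p,-p)) (delta (q,-p)) with hH1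
  set H2 : Lottery (ℝ×ℝ) := mix2 (delta (-5*p,q)) (delta (5*q,q)) with hH2
  set M1 : Lottery (ℝ×ℝ) := mix2 (delta (-p,-p)) (delta (5*q,-p)) with hM1
  set M2 : Lottery (ℝ×ℝ) := mix2 (delta (-5*p,q)) (delta (q,-p)) with hM2
  set g1 : Lottery (ℝ×ℝ) := mix2 (delta (0,-p)) (delta (0,q)) with hg1
  set g2 : Lottery (ℝ×ℝ) := mix2 H1 (delta (0,q)) with hg2
  set g3 : Lottery (ℝ×ℝ) := mix2 H2 H1 with hg3
  set g4 : Lottery (ℝ×ℝ) := mix2 (mix2 (delta (5*q,-p)) (delta (-5*p,q))) H1 with hg4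
  set g5 : Lottery (ℝ×ℝ) := mix2 (delta (cs,-p)) M2 with hg5
  -- abs computations
  have habs1 : |(-p) - q| = 1 := by
    have h : (-p) - q = -1 := by rw [hp, hq]; ring
    rw [h]; norm_num
  have habs2 : |(-(5*p)) - 5*q| = 5 := by
    have h : (-(5*p)) - 5*q = -5 := by rw [hp, hq]; ring
    rw [h]; norm_num
  have habs3 : |(-p) - 5*q| = p + 5*q := by
    rw [abs_of_neg (by nlinarith : (-p) - 5*q < 0)]; ring
  have hcond1 : ((-p) + q)/2 + |(-p) - q|/k ≤ 0 := by
    rw [habs1]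
    have h : ((-p) + q)/2 + 1/k = 0 := by rw [hp, hq]; ring
    linarith
  have hcond2 : ((-(5*p)) + 5*q)/2 + |(-(5*p)) - 5*q|/k ≤ 0 := by
    rw [habs2]
    have h : ((-(5*p)) + 5*q)/2 + 5/k = 0 := by rw [hp, hq]; ring
    linarith
  have hne1 : (-p) ≠ q := by intro h; rw [← h] at hq0; linarith
  have hne2 : (-(5*p)) ≠ 5*q := by intro h; nlinarith
  have hne3 : (-p) ≠ 5*q := by intro h; nlinarith
  -- step 1 : δ(0,0) ≻ g1
  have s1 : SPref R (delta ((0:ℝ),(0:ℝ))) g1 := by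
    have h := ((hky (-p) q 0 0 hne1).2.1) hcond1
    exact h
  -- step 2 : g1 ≻ g2
  have s2 : SPref R g1 g2 := by
    have c2 : SPref R (delta ((0:ℝ),-p)) H1 := ((hkx (-p) q (-p) 0 hne1).2.1) hcond1
    exact indS _ _ (delta (0,q)) c2
  -- step 3 : g2 ≻ g3
  have s3 : SPref R g2 g3 := by
    have c3 : SPref R (delta ((0:ℝ),q)) H2 := by
      have h := ((hkx (-(5*p)) (5*q) q 0 hne2).2.1) hcond2
      have he : (-(5*p), q) = ((-5*p : ℝ), q) := by norm_num
      rw [he] at h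
      exact h
    have h := indS _ _ H1 c3
    rwa [mix2_comm (delta ((0:ℝ),q)) H1] at h
  -- step 4 : R g3 g4
  have s4 : R g3 g4 := by
    have par : R (delta ((5*q:ℝ),q)) (delta ((5*q:ℝ),-p)) :=
      hpar (5*q) q (5*q) (-p) le_rfl (by nlinarith)
    have i1 := indR _ _ (delta ((-5*p:ℝ),q)) par
    have i2 := indR _ _ H1 i1
    rwa [mix2_comm (delta ((5*q:ℝ),q)) (delta ((-5*p:ℝ),q))] at i2
  -- regrouping : g4 = mix2 M1 M2
  have hre : g4 = mix2 M1 M2 := by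
    apply Lottery.ext'
    rw [hg4, hM1, hM2, hH1]
    simp only [mix2_val]
    module
  -- step 5 : g4 ≻ g5
  have s5 : SPref R g4 g5 := by
    have hcond3 : cs ≤ ((-p) + 5*q)/2 - |(-p) - 5*q|/k := by
      rw [habs3]
    have c5 : SPref R M1 (delta (cs,-p)) := ((hkx (-p) (5*q) (-p) cs hne3).1) hcond3
    have h := indS _ _ M2 c5
    rwa [← hre] at h
  -- the full chain
  have sfinal : SPref R (delta ((0:ℝ),(0:ℝ))) g5 :=
    rSTrans s1.1 (rSTrans s2.1 (rSTrans s3.1 (rSTrans s4 s5)))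
  -- Negative dominance gives a contradiction
  obtain ⟨o, ho, o', ho', hd⟩ := hnd _ _ sfinal
  have ho0 : o = ((0:ℝ),(0:ℝ)) := by
    have : o ∈ (Finsupp.single ((0:ℝ),(0:ℝ)) (1:ℝ)).support := ho
    rw [Finsupp.support_single_ne_zero _ (by norm_num : (1:ℝ) ≠ 0)] at this
    simpa using this
  subst ho0
  have hRd : R (delta ((0:ℝ),(0:ℝ))) (delta (o'.1, o'.2)) := by
    rw [Prod.mk.eta]; exact hd.1
  obtain ⟨hx, hy⟩ := hconv 0 0 o'.1 o'.2 hRd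
  have h0 := Finsupp.mem_support_iff.mp ho'
  have hsup : o' = ((cs:ℝ),-p) ∨ o' = ((-5*p:ℝ),q) ∨ o' = ((q:ℝ),-p) := by
    by_contra hcon
    push_neg at hcon
    obtain ⟨h1, h2, h3⟩ := hcon
    apply h0
    rw [hg5, hM2]
    simp only [mix2_val, Lottery.delta, Finsupp.coe_add, Finsupp.coe_smul, Pi.add_apply,
      Pi.smul_apply, smul_eq_mul, Finsupp.single_apply]
    rw [if_neg (fun h => h1 h.symm), if_neg (fun h => h2 h.symm), if_neg (fun h => h3 h.symm)]
    ring
  rcases hsup with h | h | h <;> subst h <;> simp only [] at hx hy <;> linarith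
end
end

section
/- Let ≽ be a preorder on Δ satisfying Pareto and Converse Pareto. If f ∈ Δ is good, then there exist outcomes o⁺ and o⁻ in the support of f such that δ_{o⁺} ≽ δ_{exp(f)} and δ_{exp(f)} ≽ δ_{o⁻}. -/
open scoped BigOperators

noncomputable section

open Lottery

/-- A lottery is good if all outcomes in its support are pairwise comparable. -/
def Good (R : Lottery (ℝ × ℝ) → Lottery (ℝ × ℝ) → Prop) (f : Lottery (ℝ × ℝ)) : Prop :=
  ∀ o ∈ f.val.support, ∀ o' ∈ f.val.support, R (delta o) (delta o') ∨ R (delta o') (delta o)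

/-- For a preorder on Δ satisfying Pareto and Converse Pareto, every good
lottery has outcomes in its support on either side of its expectation. -/
theorem statement9 (R : Lottery (ℝ × ℝ) → Lottery (ℝ × ℝ) → Prop)
    (hrefl : Reflexive R) (htrans : Transitive R)
    (hP : Pareto R) (hCP : ConvPareto R)
    (f : Lottery (ℝ × ℝ)) (hgood : Good R f) :
    ∃ op ∈ f.val.support, ∃ om ∈ f.val.support,
      R (delta op) (delta (expLot f)) ∧ R (delta (expLot f)) (delta om) := by

  classical
  have hne : f.val.support.Nonempty := by
    by_contra h
    rw [Finset.not_nonempty_iff_eq_empty] at h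
    have := f.total
    rw [Finsupp.sum, h, Finset.sum_empty] at this
    norm_num at this
  -- dominance from comparability
  have hdom : ∀ o ∈ f.val.support, ∀ o' ∈ f.val.support,
      (o'.1 ≤ o.1 ∧ o'.2 ≤ o.2) ∨ (o.1 ≤ o'.1 ∧ o.2 ≤ o'.2) := by
    intro o ho o' ho'
    rcases hgood o ho o' ho' with h | h
    · left
      have := hCP o.1 o.2 o'.1 o'.2
      simp only [Prod.mk.eta] at this
      exact this h
    · right
      have := hCP o'.1 o'.2 o.1 o.2
      simp only [Prod.mk.eta] at this
      exact this h
  obtain ⟨op, hop, hopmax⟩ := f.val.support.exists_max_image (fun o => o.1 + o.2) hne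
  obtain ⟨om, hom, hommin⟩ := f.val.support.exists_min_image (fun o => o.1 + o.2) hne
  have hopdom : ∀ o ∈ f.val.support, o.1 ≤ op.1 ∧ o.2 ≤ op.2 := by
    intro o ho
    rcases hdom op hop o ho with h | h
    · exact h
    · have := hopmax o ho
      constructor <;> linarith [h.1, h.2]
  have homdom : ∀ o ∈ f.val.support, om.1 ≤ o.1 ∧ om.2 ≤ o.2 := by
    intro o ho
    rcases hdom om hom o ho with h | h
    · constructor <;> linarith [(hommin o ho), h.1, h.2]
    · exact h
  refine ⟨op, hop, om, hom, ?_, ?_⟩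
  · have h1 : (expLot f).1 ≤ op.1 := by
      have : (f.val.sum fun o p => p * o.1) ≤ f.val.sum fun _ p => p * op.1 := by
        apply Finset.sum_le_sum
        intro o ho
        exact mul_le_mul_of_nonneg_left (hopdom o ho).1 (f.nonneg o)
      have h2 : (f.val.sum fun _ p => p * op.1) = op.1 := by
        rw [← Finsupp.sum_mul, f.total, one_mul]
      simpa [expLot, h2] using this
    have h2 : (expLot f).2 ≤ op.2 := by
      have : (f.val.sum fun o p => p * o.2) ≤ f.val.sum fun _ p => p * op.2 := by
        apply Finset.sum_le_sum
        intro o ho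
        exact mul_le_mul_of_nonneg_left (hopdom o ho).2 (f.nonneg o)
      have h3 : (f.val.sum fun _ p => p * op.2) = op.2 := by
        rw [← Finsupp.sum_mul, f.total, one_mul]
      simpa [expLot, h3] using this
    have := hP op.1 op.2 (expLot f).1 (expLot f).2 h1 h2
    simpa only [Prod.mk.eta] using this
  · have h1 : om.1 ≤ (expLot f).1 := by
      have : (f.val.sum fun _ p => p * om.1) ≤ f.val.sum fun o p => p * o.1 := by
        apply Finset.sum_le_sum
        intro o ho
        exact mul_le_mul_of_nonneg_left (homdom o ho).1 (f.nonneg o)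
      have h2 : (f.val.sum fun _ p => p * om.1) = om.1 := by
        rw [← Finsupp.sum_mul, f.total, one_mul]
      simpa [expLot, h2] using this
    have h2 : om.2 ≤ (expLot f).2 := by
      have : (f.val.sum fun _ p => p * om.2) ≤ f.val.sum fun o p => p * o.2 := by
        apply Finset.sum_le_sum
        intro o ho
        exact mul_le_mul_of_nonneg_left (homdom o ho).2 (f.nonneg o)
      have h3 : (f.val.sum fun _ p => p * om.2) = om.2 := by
        rw [← Finsupp.sum_mul, f.total, one_mul]
      simpa [expLot, h3] using this
    have := hP (expLot f).1 (expLot f).2 om.1 om.2 h1 h2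
    simpa only [Prod.mk.eta] using this
end
end

section
/- There exists a preorder ≽ on Δ that simultaneously satisfies Pareto, Converse Pareto, Good Expectations, the Stochastic Dominance axiom, and Negative Dominance. -/
open scoped BigOperators

noncomputable section

open Lottery

open Classical in
/-- `f` stochastically dominates `g` in `R`. -/
def StochDom (R : Lottery (ℝ × ℝ) → Lottery (ℝ × ℝ) → Prop) (f g : Lottery (ℝ × ℝ)) : Prop :=
  ∃ n : ℕ, 0 < n ∧ ∃ a b : Fin n → ℝ × ℝ, ∃ p : Fin n → ℝ,
    (∀ i, 0 < p i ∧ p i ≤ 1) ∧ (∑ i, p i = 1) ∧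
    (∀ o : ℝ × ℝ, f.val o = ∑ i ∈ Finset.univ.filter (fun i => a i = o), p i) ∧
    (∀ o : ℝ × ℝ, g.val o = ∑ i ∈ Finset.univ.filter (fun i => b i = o), p i) ∧
    (∀ i, R (delta (a i)) (delta (b i))) ∧ (∃ i, SPref R (delta (a i)) (delta (b i)))

/-- The Stochastic Dominance axiom. -/
def StochDomAx (R : Lottery (ℝ × ℝ) → Lottery (ℝ × ℝ) → Prop) : Prop :=
  ∀ f g : Lottery (ℝ × ℝ), StochDom R f g → SPref R f g

/-- Good Expectations. -/
def GoodExp (R : Lottery (ℝ × ℝ) → Lottery (ℝ × ℝ) → Prop) : Prop :=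
  ∀ f : Lottery (ℝ × ℝ), Good R f → Indiff R f (delta (expLot f))

/-!
Let `f ≽ g` hold when `g` is reached from `f` by finitely many coupling steps (couple `f` and
`g` so that the `g`-outcome is Pareto-below the `f`-outcome in every state), possibly with one
expectation step in between: from a lottery `h` whose support is a Pareto chain to a lottery
`c` of the same kind with `E c ≤ E h`. Along every step the expectation weakly decreases, and
strictly so along a coupling step with a strict improvement; this gives Converse Pareto and
Stochastic Dominance, while a chain lottery and the point mass at its expectation are linked by
expectation steps both ways, which gives Good Expectations. For Negative Dominance, coupling
steps only lower outcomes, so some outcome of `f` lies above the top `M` of `h` and some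
outcome of `g` below the bottom `m` of `c`, and `m ≤ E c ≤ E h ≤ M`. This pair is strictly
ordered unless all of these collapse to one point, and then `h = c` is a point mass and `g` is
reached from `f` by coupling steps alone.
-/

open Relation

theorem Finset.sum_smul_lt_sum_smul {ι M : Type*} [AddCommMonoid M] [PartialOrder M]
    [IsOrderedCancelAddMonoid M] [Module ℝ M] [PosSMulStrictMono ℝ M]
    {s : Finset ι} {p : ι → ℝ} {x y : ι → M} (hp : ∀ i ∈ s, 0 ≤ p i)
    (hxy : ∀ i ∈ s, x i ≤ y i) (hlt : ∃ i ∈ s, 0 < p i ∧ x i < y i) :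
    ∑ i ∈ s, p i • x i < ∑ i ∈ s, p i • y i := by
  obtain ⟨i, hi, hpi, hxyi⟩ := hlt
  exact Finset.sum_lt_sum (fun j hj => smul_le_smul_of_nonneg_left (hxy j hj) (hp j hj))
    ⟨i, hi, smul_lt_smul_of_pos_left hxyi hpi⟩

theorem Finset.exists_isGreatest_of_isChain {α : Type*} [Preorder α] {s : Finset α}
    (hs : s.Nonempty) (hc : IsChain (· ≤ ·) (s : Set α)) : ∃ M, IsGreatest (s : Set α) M := by
  obtain ⟨M, hM⟩ := s.exists_maximal hs
  refine ⟨M, hM.1, fun x hx => ?_⟩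
  rcases eq_or_ne x M with rfl | hne
  · exact le_rfl
  · exact (hc hx hM.1 hne).elim id (hM.2 hx)

theorem Finset.exists_isLeast_of_isChain {α : Type*} [Preorder α] {s : Finset α}
    (hs : s.Nonempty) (hc : IsChain (· ≤ ·) (s : Set α)) : ∃ m, IsLeast (s : Set α) m := by
  obtain ⟨m, hm⟩ := s.exists_minimal hs
  refine ⟨m, hm.1, fun x hx => ?_⟩
  rcases eq_or_ne x m with rfl | hne
  · exact le_rfl
  · exact (hc hx hm.1 hne).elim (hm.2 hx) id

namespace Finsupp

variable {ι X : Type*} [Fintype ι] {a : ι → X} {p : ι → ℝ}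

theorem exists_of_mem_support_sum_single {x : X}
    (hx : x ∈ (∑ i, single (a i) (p i)).support) : ∃ i, p i ≠ 0 ∧ a i = x := by
  rw [mem_support_iff, finsetSum_apply] at hx
  obtain ⟨i, -, hi⟩ := Finset.exists_ne_zero_of_sum_ne_zero hx
  exact ⟨i, (single_apply_ne_zero.1 hi).2, (single_apply_ne_zero.1 hi).1.symm⟩

theorem mem_support_sum_single (hp : ∀ i, 0 ≤ p i) {i : ι} (hi : p i ≠ 0) :
    a i ∈ (∑ j, single (a j) (p j)).support := by
  rw [mem_support_iff, finsetSum_apply]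
  refine (lt_of_lt_of_le ((hp i).lt_of_ne' hi) ?_).ne'
  calc p i = single (a i) (p i) (a i) := (single_eq_same).symm
    _ ≤ ∑ j, single (a j) (p j) (a i) :=
      Finset.single_le_sum (f := fun j => single (a j) (p j) (a i))
        (fun j _ => single_nonneg.2 (hp j) (a i)) (Finset.mem_univ i)

end Finsupp

namespace Lottery

variable {X M : Type*}

theorem val_injective : Function.Injective (val : Lottery X → X →₀ ℝ) := by
  rintro ⟨f, _, _⟩ ⟨g, _, _⟩ rfl
  rfl

theorem sum_val (f : Lottery X) : ∑ o ∈ f.val.support, f.val o = 1 := f.total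

theorem pos_of_mem_support {f : Lottery X} {x : X} (hx : x ∈ f.val.support) : 0 < f.val x :=
  (f.nonneg x).lt_of_ne' (Finsupp.mem_support_iff.1 hx)

theorem support_nonempty (f : Lottery X) : f.val.support.Nonempty := by
  rw [Finset.nonempty_iff_ne_empty]
  intro h
  simpa [h] using f.sum_val

theorem sum_smul_const [AddCommMonoid M] [Module ℝ M] (f : Lottery X) (y : M) :
    ∑ o ∈ f.val.support, f.val o • y = y := by
  rw [← Finset.sum_smul, sum_val, one_smul]

theorem support_delta (x : X) : (delta x).val.support = {x} :=
  Finsupp.support_single x one_ne_zero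

theorem eq_delta_of_support_subset {f : Lottery X} {x : X} (h : f.val.support ⊆ {x}) :
    f = delta x := by
  have hf := Finsupp.support_subset_singleton.1 h
  have hx : f.val x = 1 := by
    rw [← f.sum_val, Finset.sum_subset h fun y _ hy => Finsupp.notMem_support_iff.1 hy,
      Finset.sum_singleton]
  exact val_injective (hf.trans (by rw [hx]; rfl))

theorem val_eq_sum_single [DecidableEq X] {n : ℕ} {f : Lottery X} {a : Fin n → X} {p : Fin n → ℝ}
    (hf : ∀ o, f.val o = ∑ i ∈ Finset.univ.filter (fun i => a i = o), p i) :
    f.val = ∑ i, Finsupp.single (a i) (p i) := by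
  ext o
  rw [hf, Finsupp.finsetSum_apply, Finset.sum_filter]
  exact Finset.sum_congr rfl fun i _ => by rw [Finsupp.single_apply]

def CouplingDominates [Preorder X] (f g : Lottery X) : Prop :=
  ∃ n : ℕ, ∃ a b : Fin n → X, ∃ p : Fin n → ℝ, (∀ i, 0 ≤ p i) ∧
    f.val = ∑ i, Finsupp.single (a i) (p i) ∧ g.val = ∑ i, Finsupp.single (b i) (p i) ∧
    ∀ i, b i ≤ a i

theorem couplingDominates_delta [Preorder X] {x y : X} (h : y ≤ x) :
    CouplingDominates (delta x) (delta y) :=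
  ⟨1, fun _ => x, fun _ => y, fun _ => 1, fun _ => zero_le_one, by simp [delta],
    by simp [delta], fun _ => h⟩

namespace CouplingDominates

theorem exists_ge_of_mem_right [Preorder X] {f g : Lottery X} (hfg : CouplingDominates f g)
    {x : X} (hx : x ∈ g.val.support) : ∃ o ∈ f.val.support, x ≤ o := by
  obtain ⟨n, a, b, p, hp, hf, hg, hba⟩ := hfg
  rw [hg] at hx
  obtain ⟨i, hi, rfl⟩ := Finsupp.exists_of_mem_support_sum_single hx
  exact ⟨a i, hf ▸ Finsupp.mem_support_sum_single hp hi, hba i⟩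

theorem exists_le_of_mem_left [Preorder X] {f g : Lottery X} (hfg : CouplingDominates f g)
    {x : X} (hx : x ∈ f.val.support) : ∃ o ∈ g.val.support, o ≤ x := by
  obtain ⟨n, a, b, p, hp, hf, hg, hba⟩ := hfg
  rw [hf] at hx
  obtain ⟨i, hi, rfl⟩ := Finsupp.exists_of_mem_support_sum_single hx
  exact ⟨b i, hg ▸ Finsupp.mem_support_sum_single hp hi, hba i⟩

theorem exists_lt_of_ne [PartialOrder X] {f g : Lottery X} (hfg : CouplingDominates f g)
    (hne : f ≠ g) : ∃ o ∈ f.val.support, ∃ o' ∈ g.val.support, o' < o := by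
  obtain ⟨n, a, b, p, hp, hf, hg, hba⟩ := hfg
  by_contra! hnone
  refine hne (val_injective ?_)
  rw [hf, hg]
  refine Finset.sum_congr rfl fun i _ => ?_
  by_cases hi : p i = 0
  · simp [hi]
  · rw [((hba i).lt_or_eq.resolve_left (hnone _ (hf ▸ Finsupp.mem_support_sum_single hp hi)
      _ (hg ▸ Finsupp.mem_support_sum_single hp hi)))]

end CouplingDominates

theorem exists_ge_of_reflTransGen [Preorder X] {f g : Lottery X}
    (hfg : ReflTransGen CouplingDominates f g) {x : X} (hx : x ∈ g.val.support) :
    ∃ o ∈ f.val.support, x ≤ o := by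
  induction hfg generalizing x with
  | refl => exact ⟨x, hx, le_rfl⟩
  | tail _ hkg ih =>
    obtain ⟨y, hy, hxy⟩ := hkg.exists_ge_of_mem_right hx
    obtain ⟨o, ho, hyo⟩ := ih hy
    exact ⟨o, ho, hxy.trans hyo⟩

theorem exists_le_of_reflTransGen [Preorder X] {f g : Lottery X}
    (hfg : ReflTransGen CouplingDominates f g) {x : X} (hx : x ∈ f.val.support) :
    ∃ o ∈ g.val.support, o ≤ x := by
  induction hfg using ReflTransGen.head_induction_on generalizing x with
  | refl => exact ⟨x, hx, le_rfl⟩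
  | head hfk _ ih =>
    obtain ⟨y, hy, hyx⟩ := hfk.exists_le_of_mem_left hx
    obtain ⟨o, ho, hoy⟩ := ih hy
    exact ⟨o, ho, hoy.trans hyx⟩

theorem exists_lt_of_reflTransGen [PartialOrder X] {f g : Lottery X}
    (hfg : ReflTransGen CouplingDominates f g) (hne : f ≠ g) :
    ∃ o ∈ f.val.support, ∃ o' ∈ g.val.support, o' < o := by
  induction hfg with
  | refl => exact absurd rfl hne
  | @tail k g hfk hkg ih =>
    by_cases hk : k = g
    · subst hk
      exact ih hne
    obtain ⟨u, hu, o', ho', hlt⟩ := hkg.exists_lt_of_ne hk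
    obtain ⟨o, ho, huo⟩ := exists_ge_of_reflTransGen hfk hu
    exact ⟨o, ho, o', ho', hlt.trans_le huo⟩

theorem expLot_eq_sum_smul (f : Lottery (ℝ × ℝ)) :
    expLot f = ∑ o ∈ f.val.support, f.val o • o := by
  ext <;> simp [expLot, Finsupp.sum, Prod.fst_sum, Prod.snd_sum]

theorem expLot_eq_of_val_eq {n : ℕ} {f : Lottery (ℝ × ℝ)} {a : Fin n → ℝ × ℝ} {p : Fin n → ℝ}
    (hf : f.val = ∑ i, Finsupp.single (a i) (p i)) : expLot f = ∑ i, p i • a i := by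
  rw [show expLot f = f.val.sum fun o q => q • o from expLot_eq_sum_smul f, hf,
    ← Finsupp.sum_finsetSum_index (h := fun o q => q • o) (fun _ => zero_smul ℝ _)
      fun _ _ _ => add_smul _ _ _]
  exact Finset.sum_congr rfl fun i _ => Finsupp.sum_single_index (zero_smul ℝ _)

theorem expLot_delta (x : ℝ × ℝ) : expLot (delta x) = x := by
  rw [expLot_eq_sum_smul, support_delta, Finset.sum_singleton]
  simp [delta]

theorem CouplingDominates.expLot_le {f g : Lottery (ℝ × ℝ)} (hfg : CouplingDominates f g) :
    expLot g ≤ expLot f := by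
  obtain ⟨n, a, b, p, hp, hf, hg, hba⟩ := hfg
  rw [expLot_eq_of_val_eq hf, expLot_eq_of_val_eq hg]
  exact Finset.sum_le_sum fun i _ => smul_le_smul_of_nonneg_left (hba i) (hp i)

theorem expLot_le_of_reflTransGen {f g : Lottery (ℝ × ℝ)}
    (hfg : ReflTransGen CouplingDominates f g) : expLot g ≤ expLot f := by
  induction hfg with
  | refl => exact le_rfl
  | tail _ hkg ih => exact hkg.expLot_le.trans ih

theorem expLot_le_of_forall_le {f : Lottery (ℝ × ℝ)} {y : ℝ × ℝ}
    (h : ∀ x ∈ f.val.support, x ≤ y) : expLot f ≤ y := by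
  rw [expLot_eq_sum_smul, ← sum_smul_const f y]
  exact Finset.sum_le_sum fun x hx => smul_le_smul_of_nonneg_left (h x hx) (f.nonneg x)

theorem le_expLot_of_forall_ge {f : Lottery (ℝ × ℝ)} {y : ℝ × ℝ}
    (h : ∀ x ∈ f.val.support, y ≤ x) : y ≤ expLot f := by
  rw [expLot_eq_sum_smul, ← sum_smul_const f y]
  exact Finset.sum_le_sum fun x hx => smul_le_smul_of_nonneg_left (h x hx) (f.nonneg x)

theorem eq_delta_of_forall_le_of_expLot_eq {f : Lottery (ℝ × ℝ)} {y : ℝ × ℝ}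
    (h : ∀ x ∈ f.val.support, x ≤ y) (he : expLot f = y) : f = delta y := by
  refine eq_delta_of_support_subset fun x hx => Finset.mem_singleton.2 ?_
  by_contra hne
  refine (lt_irrefl y) ?_
  calc y = ∑ o ∈ f.val.support, f.val o • o := he ▸ expLot_eq_sum_smul f
    _ < ∑ o ∈ f.val.support, f.val o • y := Finset.sum_smul_lt_sum_smul
        (fun o ho => f.nonneg o) h ⟨x, hx, pos_of_mem_support hx, (h x hx).lt_of_ne hne⟩
    _ = y := sum_smul_const f y

theorem eq_delta_of_forall_ge_of_expLot_eq {f : Lottery (ℝ × ℝ)} {y : ℝ × ℝ}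
    (h : ∀ x ∈ f.val.support, y ≤ x) (he : expLot f = y) : f = delta y := by
  refine eq_delta_of_support_subset fun x hx => Finset.mem_singleton.2 ?_
  by_contra hne
  refine (lt_irrefl y) ?_
  calc y = ∑ o ∈ f.val.support, f.val o • y := (sum_smul_const f y).symm
    _ < ∑ o ∈ f.val.support, f.val o • o := Finset.sum_smul_lt_sum_smul
        (fun o ho => f.nonneg o) h ⟨x, hx, pos_of_mem_support hx, (h x hx).lt_of_ne' hne⟩
    _ = y := he ▸ (expLot_eq_sum_smul f).symm

def ChainExpPref (f g : Lottery (ℝ × ℝ)) : Prop :=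
  ReflTransGen CouplingDominates f g ∨
    ∃ h c : Lottery (ℝ × ℝ), IsChain (· ≤ ·) (h.val.support : Set (ℝ × ℝ)) ∧
      IsChain (· ≤ ·) (c.val.support : Set (ℝ × ℝ)) ∧ ReflTransGen CouplingDominates f h ∧
      expLot c ≤ expLot h ∧ ReflTransGen CouplingDominates c g

namespace ChainExpPref

theorem refl (f : Lottery (ℝ × ℝ)) : ChainExpPref f f := .inl .refl

theorem trans {f g k : Lottery (ℝ × ℝ)} (hfg : ChainExpPref f g) (hgk : ChainExpPref g k) :
    ChainExpPref f k := by
  rcases hfg with hfg | ⟨h, c, hh, hc, hfh, hch, hcg⟩ <;>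
    rcases hgk with hgk | ⟨h', c', hh', hc', hgh', hch', hc'k⟩
  · exact .inl (hfg.trans hgk)
  · exact .inr ⟨h', c', hh', hc', hfg.trans hgh', hch', hc'k⟩
  · exact .inr ⟨h, c, hh, hc, hfh, hch, hcg.trans hgk⟩
  · refine .inr ⟨h, c', hh, hc', hfh, ?_, hc'k⟩
    calc expLot c' ≤ expLot h' := hch'
      _ ≤ expLot g := expLot_le_of_reflTransGen hgh'
      _ ≤ expLot c := expLot_le_of_reflTransGen hcg
      _ ≤ expLot h := hch

theorem expLot_le {f g : Lottery (ℝ × ℝ)} (hfg : ChainExpPref f g) : expLot g ≤ expLot f := by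
  rcases hfg with hfg | ⟨h, c, -, -, hfh, hch, hcg⟩
  · exact expLot_le_of_reflTransGen hfg
  · exact (expLot_le_of_reflTransGen hcg).trans (hch.trans (expLot_le_of_reflTransGen hfh))

theorem delta_iff {x y : ℝ × ℝ} : ChainExpPref (delta x) (delta y) ↔ y ≤ x := by
  refine ⟨fun h => ?_, fun h => .inl (.single (couplingDominates_delta h))⟩
  simpa only [expLot_delta] using h.expLot_le

theorem spref_delta_iff {x y : ℝ × ℝ} : SPref ChainExpPref (delta x) (delta y) ↔ y < x := by
  rw [SPref, delta_iff, delta_iff, lt_iff_le_not_ge]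

end ChainExpPref

open ChainExpPref

theorem isChain_support_delta (x : ℝ × ℝ) :
    IsChain (· ≤ ·) ((delta x).val.support : Set (ℝ × ℝ)) := by
  rw [support_delta, Finset.coe_singleton]
  exact Set.Subsingleton.isChain Set.subsingleton_singleton

theorem pareto_chainExpPref : Pareto ChainExpPref :=
  fun _ _ _ _ hx hy => delta_iff.2 (Prod.mk_le_mk.2 ⟨hx, hy⟩)

theorem convPareto_chainExpPref : ConvPareto ChainExpPref :=
  fun _ _ _ _ h => Prod.mk_le_mk.1 (delta_iff.1 h)

theorem goodExp_chainExpPref : GoodExp ChainExpPref := by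
  intro f hf
  have hchain : IsChain (· ≤ ·) (f.val.support : Set (ℝ × ℝ)) := fun o ho o' ho' _ =>
    (hf o ho o' ho').symm.imp delta_iff.1 delta_iff.1
  have he := expLot_delta (expLot f)
  exact ⟨.inr ⟨f, _, hchain, isChain_support_delta _, .refl, he.le, .refl⟩,
    .inr ⟨_, f, isChain_support_delta _, hchain, .refl, he.ge, .refl⟩⟩

theorem stochDomAx_chainExpPref : StochDomAx ChainExpPref := by
  rintro f g ⟨n, -, a, b, p, hp, -, hf, hg, hba, i, hi⟩
  replace hf := val_eq_sum_single hf
  replace hg := val_eq_sum_single hg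
  have hp₀ : ∀ j, 0 ≤ p j := fun j => (hp j).1.le
  have hba : ∀ j, b j ≤ a j := fun j => delta_iff.1 (hba j)
  have hlt : expLot g < expLot f := by
    rw [expLot_eq_of_val_eq hf, expLot_eq_of_val_eq hg]
    exact Finset.sum_smul_lt_sum_smul (fun j _ => hp₀ j) (fun j _ => hba j)
      ⟨i, Finset.mem_univ i, (hp i).1, spref_delta_iff.1 hi⟩
  exact ⟨.inl (.single ⟨n, a, b, p, hp₀, hf, hg, hba⟩), fun hgf => hgf.expLot_le.not_gt hlt⟩

theorem negDominance_chainExpPref : NegDominance ChainExpPref := by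
  rintro f g ⟨hfg, hgf⟩
  have hne : f ≠ g := by
    rintro rfl
    exact hgf (refl f)
  simp only [spref_delta_iff]
  rcases hfg with hfg | ⟨h, c, hh, hc, hfh, hch, hcg⟩
  · exact exists_lt_of_reflTransGen hfg hne
  obtain ⟨M, hM_mem, hM⟩ := h.val.support.exists_isGreatest_of_isChain h.support_nonempty hh
  obtain ⟨m, hm_mem, hm⟩ := c.val.support.exists_isLeast_of_isChain c.support_nonempty hc
  obtain ⟨o, ho, hMo⟩ := exists_ge_of_reflTransGen hfh hM_mem
  obtain ⟨o', ho', ho'm⟩ := exists_le_of_reflTransGen hcg hm_mem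
  have hmc : m ≤ expLot c := le_expLot_of_forall_ge fun x hx => hm hx
  have hhM : expLot h ≤ M := expLot_le_of_forall_le fun x hx => hM hx
  rcases (ho'm.trans (hmc.trans (hch.trans (hhM.trans hMo)))).lt_or_eq with hlt | heq
  · exact ⟨o, ho, o', ho', hlt⟩
  have hMm : M ≤ m := hMo.trans (heq ▸ ho'm)
  have hhc : h = c := by
    rw [eq_delta_of_forall_le_of_expLot_eq (fun x hx => hM hx)
        (le_antisymm hhM (hMm.trans (hmc.trans hch))),
      eq_delta_of_forall_ge_of_expLot_eq (fun x hx => hm hx)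
        (le_antisymm (hch.trans (hhM.trans hMm)) hmc),
      le_antisymm hMm (hmc.trans (hch.trans hhM))]
  exact exists_lt_of_reflTransGen (hfh.trans (hhc ▸ hcg)) hne

end Lottery

/-- There exists a preorder on Δ satisfying Pareto, Converse Pareto,
Good Expectations, the Stochastic Dominance axiom, and Negative Dominance. -/
theorem statement10 :
    ∃ R : Lottery (ℝ × ℝ) → Lottery (ℝ × ℝ) → Prop,
      Reflexive R ∧ Transitive R ∧ Pareto R ∧ ConvPareto R ∧
      GoodExp R ∧ StochDomAx R ∧ NegDominance R :=
  ⟨ChainExpPref, ChainExpPref.refl, fun _ _ _ => ChainExpPref.trans, pareto_chainExpPref,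
    convPareto_chainExpPref, goodExp_chainExpPref, stochDomAx_chainExpPref,
    negDominance_chainExpPref⟩
end
end

section
/- There exists a preorder ≽ on Δ that simultaneously satisfies Pareto, Converse Pareto, Negative Dominance, Continuity, Comparable Independence, and the Stochastic Dominance axiom. -/
open scoped BigOperators

noncomputable section

open Lottery

/-- Mixture with coefficient drawn from the unit interval. -/
noncomputable def mixI {X : Type*} (α : Set.Icc (0:ℝ) 1) (f g : Lottery X) : Lottery X :=
  mix α.1 α.2.1 α.2.2 f g

/-- Continuity: the relevant sets of mixture weights are closed in [0,1]. -/
def Continuity (R : Lottery (ℝ × ℝ) → Lottery (ℝ × ℝ) → Prop) : Prop :=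
  ∀ f g h : Lottery (ℝ × ℝ),
    IsClosed {α : Set.Icc (0:ℝ) 1 | R (mixI α g h) f} ∧
    IsClosed {α : Set.Icc (0:ℝ) 1 | R f (mixI α g h)}

open Classical in
/-- Comparable Independence. -/
def CompIndep (R : Lottery (ℝ × ℝ) → Lottery (ℝ × ℝ) → Prop) : Prop :=
  ∀ f g h : Lottery (ℝ × ℝ),
    (∀ o ∈ f.val.support ∪ g.val.support ∪ h.val.support,
      ∀ o' ∈ f.val.support ∪ g.val.support ∪ h.val.support,
        R (delta o) (delta o') ∨ R (delta o') (delta o)) →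
    ∀ α : ℝ, ∀ (h1 : 0 < α) (h2 : α < 1),
      (R f g ↔ R (mix α h1.le h2.le f h) (mix α h1.le h2.le g h))

section Aux

open Finsupp

/-- Expected utility of a lottery. -/
noncomputable def Ex (f : Lottery (ℝ × ℝ)) (u : ℝ × ℝ → ℝ) : ℝ :=
  f.val.sum fun o p => p * u o

/-- The stochastic-dominance preorder. -/
def Rsd (f g : Lottery (ℝ × ℝ)) : Prop :=
  ∀ u : ℝ × ℝ → ℝ, Monotone u → Ex g u ≤ Ex f u

lemma Ex_delta (o : ℝ × ℝ) (u : ℝ × ℝ → ℝ) : Ex (delta o) u = u o := by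
  simp [Ex, delta, Finsupp.sum_single_index]

lemma Ex_mix (α : ℝ) (h1 : 0 ≤ α) (h2 : α ≤ 1) (f g : Lottery (ℝ × ℝ)) (u : ℝ × ℝ → ℝ) :
    Ex (mix α h1 h2 f g) u = α * Ex f u + (1 - α) * Ex g u := by
  unfold Ex mix
  rw [Finsupp.sum_add_index' (fun o => zero_mul (u o)) (fun o p q => add_mul p q (u o))]
  rw [Finsupp.sum_smul_index (fun o => zero_mul (u o)),
      Finsupp.sum_smul_index (fun o => zero_mul (u o))]
  simp only [mul_assoc]
  rw [← Finsupp.mul_sum, ← Finsupp.mul_sum]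

lemma Rsd_delta_iff (o o' : ℝ × ℝ) : Rsd (delta o) (delta o') ↔ o' ≤ o := by
  constructor
  · intro h
    constructor
    · simpa [Ex_delta] using h (fun z => z.1) monotone_fst
    · simpa [Ex_delta] using h (fun z => z.2) monotone_snd
  · intro h u hu
    rw [Ex_delta, Ex_delta]; exact hu h

lemma Rsd_refl : Reflexive Rsd := fun f u hu => le_refl _

lemma Rsd_trans : Transitive Rsd := fun f g h hfg hgh u hu =>
  le_trans (hgh u hu) (hfg u hu)

lemma Ex_eq_sum_support (f : Lottery (ℝ × ℝ)) (u : ℝ × ℝ → ℝ) :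
    Ex f u = ∑ o ∈ f.val.support, f.val o * u o := rfl

lemma sum_support_eq_one (f : Lottery (ℝ × ℝ)) :
    ∑ o ∈ f.val.support, f.val o = 1 := f.total

end Aux
section Aux2
open Classical

/-- Indicator of an "upper" predicate is monotone. -/
lemma indicator_mono {P : ℝ × ℝ → Prop} [DecidablePred P] (hP : ∀ z w, z ≤ w → P z → P w) :
    Monotone (fun z => if P z then (1:ℝ) else 0) := by
  intro z w hzw
  by_cases hz : P z
  · simp [hz, hP z w hzw hz]
  · by_cases hw : P w <;> simp [hz, hw]

/-- A finsupp dominated pointwise by another with equal total sum is equal. -/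
lemma finsupp_eq_of_le_of_sum_eq (f g : Lottery (ℝ × ℝ))
    (hle : ∀ o, g.val o ≤ f.val o) : f.val = g.val := by
  classical
  set T := f.val.support ∪ g.val.support with hT
  have hfs : ∑ o ∈ T, f.val o = 1 := by
    rw [← f.total]
    exact (Finset.sum_subset Finset.subset_union_left
      (fun x _ hx => Finsupp.notMem_support_iff.mp hx)).symm
  have hgs : ∑ o ∈ T, g.val o = 1 := by
    rw [← g.total]
    exact (Finset.sum_subset Finset.subset_union_right
      (fun x _ hx => Finsupp.notMem_support_iff.mp hx)).symm
  have hzero : ∑ o ∈ T, (f.val o - g.val o) = 0 := by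
    rw [Finset.sum_sub_distrib, hfs, hgs]; ring
  have hall : ∀ o ∈ T, f.val o - g.val o = 0 := by
    intro o ho
    have := (Finset.sum_eq_zero_iff_of_nonneg
      (fun i _ => sub_nonneg.mpr (hle i))).mp hzero o ho
    exact this
  ext o
  by_cases ho : o ∈ T
  · linarith [hall o ho]
  · have h1 : f.val o = 0 := Finsupp.notMem_support_iff.mp
      (fun h => ho (Finset.mem_union_left _ h))
    have h2 : g.val o = 0 := Finsupp.notMem_support_iff.mp
      (fun h => ho (Finset.mem_union_right _ h))
    rw [h1, h2]

lemma lottery_val_eq_Ex {f g : Lottery (ℝ × ℝ)} (h : f.val = g.val) (u : ℝ × ℝ → ℝ) :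
    Ex f u = Ex g u := by unfold Ex; rw [h]

/-- Negative Dominance for Rsd. -/
lemma Rsd_negdom : NegDominance Rsd := by
  classical
  rintro f g ⟨hfg, hgf⟩
  by_contra hno
  push_neg at hno
  -- key: for o in supp f, o' in supp g, if o' ≤ o then o = o'
  have key : ∀ o ∈ f.val.support, ∀ o' ∈ g.val.support, o' ≤ o → o = o' := by
    intro o ho o' ho' hle
    have := hno o ho o' ho'
    rw [SPref] at this
    push_neg at this
    have h2 := this ((Rsd_delta_iff o o').mpr hle)
    exact le_antisymm ((Rsd_delta_iff o' o).mp h2) hle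
  -- u1 : indicator of upper closure of supp g
  set u1 : ℝ × ℝ → ℝ := fun z => if ∃ o' ∈ g.val.support, o' ≤ z then 1 else 0 with hu1
  have hu1m : Monotone u1 := by
    rw [hu1]
    apply indicator_mono (P := fun z => ∃ o' ∈ g.val.support, o' ≤ z)
    rintro z w hzw ⟨o', ho', hle⟩
    exact ⟨o', ho', le_trans hle hzw⟩
  have hEg1 : Ex g u1 = 1 := by
    rw [Ex_eq_sum_support, ← sum_support_eq_one g]
    apply Finset.sum_congr rfl
    intro o ho
    have : u1 o = 1 := by simp only [hu1]; rw [if_pos ⟨o, ho, le_refl o⟩]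
    rw [this, mul_one]
  -- claim A : every o in supp f satisfies the upper-closure condition
  have claimA : ∀ o ∈ f.val.support, ∃ o' ∈ g.val.support, o' ≤ o := by
    by_contra hA
    push_neg at hA
    obtain ⟨o₀, ho₀, hno'⟩ := hA
    have hlt : Ex f u1 < 1 := by
      rw [Ex_eq_sum_support, ← sum_support_eq_one f]
      apply Finset.sum_lt_sum
      · intro i _
        have hnn := f.nonneg i
        have : u1 i ≤ 1 := by simp only [hu1]; split <;> norm_num
        nlinarith
      · refine ⟨o₀, ho₀, ?_⟩
        have h0 : u1 o₀ = 0 := by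
          simp only [hu1]
          rw [if_neg]
          rintro ⟨o', ho', hle⟩
          exact hno' o' ho' hle
        rw [h0, mul_zero]
        exact lt_of_le_of_ne (f.nonneg o₀) (Ne.symm (Finsupp.mem_support_iff.mp ho₀))
    have := hfg u1 hu1m
    rw [hEg1] at this
    linarith
  -- supp f ⊆ supp g
  have hsub : ∀ o ∈ f.val.support, o ∈ g.val.support := by
    intro o ho
    obtain ⟨o', ho', hle⟩ := claimA o ho
    rw [key o ho o' ho' hle]; exact ho'
  -- claim B : g ≤ f pointwise
  have claimB : ∀ o, g.val o ≤ f.val o := by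
    intro o₀
    by_cases ho₀ : o₀ ∈ g.val.support
    · set u2 : ℝ × ℝ → ℝ := fun z => if o₀ ≤ z then 1 else 0 with hu2
      have hu2m : Monotone u2 := by
        rw [hu2]
        apply indicator_mono (P := fun z => o₀ ≤ z)
        exact fun z w hzw hz => le_trans hz hzw
      have hEf : Ex f u2 = f.val o₀ := by
        rw [Ex_eq_sum_support]
        have : ∀ o ∈ f.val.support, f.val o * u2 o = if o = o₀ then f.val o else 0 := by
          intro o ho
          by_cases h : o₀ ≤ o
          · have heq : o = o₀ := key o ho o₀ ho₀ h
            simp only [hu2, if_pos h, if_pos heq, mul_one]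
          · have hne : o ≠ o₀ := fun he => h (he ▸ le_refl o)
            simp only [hu2, if_neg h, if_neg hne, mul_zero]
        rw [Finset.sum_congr rfl this, Finset.sum_ite_eq' f.val.support o₀ (fun o => f.val o)]
        split
        · rfl
        · next h => exact (Finsupp.notMem_support_iff.mp h).symm
      have hEg : g.val o₀ ≤ Ex g u2 := by
        rw [Ex_eq_sum_support]
        have h1 : g.val o₀ * u2 o₀ = g.val o₀ := by
          simp only [hu2, if_pos (le_refl o₀), mul_one]
        calc g.val o₀ = g.val o₀ * u2 o₀ := h1.symm
          _ ≤ ∑ o ∈ g.val.support, g.val o * u2 o := by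
              apply Finset.single_le_sum (f := fun o => g.val o * u2 o) _ ho₀
              intro i _
              have := g.nonneg i
              have : (0:ℝ) ≤ u2 i := by simp only [hu2]; split <;> norm_num
              positivity
      calc g.val o₀ ≤ Ex g u2 := hEg
        _ ≤ Ex f u2 := hfg u2 hu2m
        _ = f.val o₀ := hEf
    · rw [Finsupp.notMem_support_iff.mp ho₀]; exact f.nonneg o₀
  exact hgf (fun u hu => le_of_eq (lottery_val_eq_Ex (finsupp_eq_of_le_of_sum_eq f g claimB) u))

end Aux2
section Aux3
open Classical

/-- Expectation via a representation of a lottery as a coupling component. -/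
lemma Ex_eq_coupling_sum {n : ℕ} (f : Lottery (ℝ × ℝ)) (a : Fin n → ℝ × ℝ)
    (p : Fin n → ℝ) (hp : ∀ i, 0 < p i)
    (hf : ∀ o : ℝ × ℝ, f.val o = ∑ i ∈ Finset.univ.filter (fun i => a i = o), p i)
    (u : ℝ × ℝ → ℝ) : Ex f u = ∑ i, p i * u (a i) := by
  classical
  have hmem : ∀ i : Fin n, a i ∈ f.val.support := by
    intro i
    rw [Finsupp.mem_support_iff, hf (a i)]
    have : 0 < ∑ j ∈ Finset.univ.filter (fun j => a j = a i), p j := by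
      apply Finset.sum_pos
      · exact fun j _ => hp j
      · exact ⟨i, Finset.mem_filter.mpr ⟨Finset.mem_univ i, rfl⟩⟩
    linarith
  rw [Ex_eq_sum_support]
  rw [← Finset.sum_fiberwise_of_maps_to (fun i _ => hmem i) (fun i => p i * u (a i))]
  apply Finset.sum_congr rfl
  intro o _
  rw [hf o, Finset.sum_mul]
  apply Finset.sum_congr rfl
  intro i hi
  rw [(Finset.mem_filter.mp hi).2]

lemma Rsd_stochdom : StochDomAx Rsd := by
  rintro f g ⟨n, hn, a, b, p, hp, hpsum, hf, hg, hab, i₀, hi₀⟩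
  have hple : ∀ i, b i ≤ a i := fun i => (Rsd_delta_iff (a i) (b i)).mp (hab i)
  have hEf : ∀ u, Ex f u = ∑ i, p i * u (a i) :=
    Ex_eq_coupling_sum f a p (fun i => (hp i).1) hf
  have hEg : ∀ u, Ex g u = ∑ i, p i * u (b i) :=
    Ex_eq_coupling_sum g b p (fun i => (hp i).1) hg
  constructor
  · intro u hu
    rw [hEf, hEg]
    exact Finset.sum_le_sum (fun i _ =>
      mul_le_mul_of_nonneg_left (hu (hple i)) (hp i).1.le)
  · intro hR
    -- use u = sum of coordinates to get a contradiction
    set u : ℝ × ℝ → ℝ := fun z => z.1 + z.2 with hudef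
    have hum : Monotone u := fun z w hzw => add_le_add hzw.1 hzw.2
    have hstrict : u (b i₀) < u (a i₀) := by
      have h1 := hple i₀
      have h2 : ¬ a i₀ ≤ b i₀ := fun hle =>
        hi₀.2 ((Rsd_delta_iff (b i₀) (a i₀)).mpr hle)
      rw [Prod.le_def] at h2
      push_neg at h2
      rcases le_or_gt (a i₀).1 (b i₀).1 with h | h
      · have := h2 h
        simp only [hudef]
        have := h1.1
        have := h1.2
        nlinarith [h2 h]
      · simp only [hudef]
        have := h1.2
        nlinarith
    have hlt : Ex g u < Ex f u := by
      rw [hEf, hEg]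
      apply Finset.sum_lt_sum
      · exact fun i _ => mul_le_mul_of_nonneg_left (hum (hple i)) (hp i).1.le
      · exact ⟨i₀, Finset.mem_univ i₀, by
          have := (hp i₀).1
          nlinarith [hstrict]⟩
    have := hR u hum
    linarith

lemma Rsd_cont : Continuity Rsd := by
  intro f g h
  constructor
  · have : {α : Set.Icc (0:ℝ) 1 | Rsd (mixI α g h) f} =
        ⋂ (u : ℝ × ℝ → ℝ) (_ : Monotone u),
          {α : Set.Icc (0:ℝ) 1 | Ex f u ≤ α.1 * Ex g u + (1 - α.1) * Ex h u} := by
      ext α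
      simp only [Set.mem_setOf_eq, Set.mem_iInter]
      constructor
      · intro hR u hu
        have := hR u hu
        rwa [mixI, Ex_mix] at this
      · intro hR u hu
        rw [mixI, Ex_mix]
        exact hR u hu
    rw [this]
    apply isClosed_iInter; intro u; apply isClosed_iInter; intro hu
    apply isClosed_le continuous_const
    apply Continuous.add
    · exact (continuous_subtype_val.mul continuous_const)
    · exact ((continuous_const.sub continuous_subtype_val).mul continuous_const)
  · have : {α : Set.Icc (0:ℝ) 1 | Rsd f (mixI α g h)} =
        ⋂ (u : ℝ × ℝ → ℝ) (_ : Monotone u),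
          {α : Set.Icc (0:ℝ) 1 | α.1 * Ex g u + (1 - α.1) * Ex h u ≤ Ex f u} := by
      ext α
      simp only [Set.mem_setOf_eq, Set.mem_iInter]
      constructor
      · intro hR u hu
        have := hR u hu
        rwa [mixI, Ex_mix] at this
      · intro hR u hu
        rw [mixI, Ex_mix]
        exact hR u hu
    rw [this]
    apply isClosed_iInter; intro u; apply isClosed_iInter; intro hu
    apply isClosed_le _ continuous_const
    apply Continuous.add
    · exact (continuous_subtype_val.mul continuous_const)
    · exact ((continuous_const.sub continuous_subtype_val).mul continuous_const)

lemma Rsd_compindep : CompIndep Rsd := by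
  intro f g h _ α h1 h2
  constructor
  · intro hR u hu
    rw [Ex_mix, Ex_mix]
    have := hR u hu
    nlinarith
  · intro hR u hu
    have := hR u hu
    rw [Ex_mix, Ex_mix] at this
    nlinarith

lemma Rsd_pareto : Pareto Rsd := by
  intro x y x' y' hx hy
  exact (Rsd_delta_iff _ _).mpr (Prod.mk_le_mk.mpr ⟨hx, hy⟩)

lemma Rsd_convpareto : ConvPareto Rsd := by
  intro x y x' y' hR
  have := (Rsd_delta_iff _ _).mp hR
  exact ⟨this.1, this.2⟩

end Aux3

/-- There exists a preorder on Δ satisfying Pareto, Converse Pareto,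
Negative Dominance, Continuity, Comparable Independence, and the Stochastic Dominance
axiom. -/
theorem statement11 :
    ∃ R : Lottery (ℝ × ℝ) → Lottery (ℝ × ℝ) → Prop,
      Reflexive R ∧ Transitive R ∧ Pareto R ∧ ConvPareto R ∧
      NegDominance R ∧ Continuity R ∧ CompIndep R ∧ StochDomAx R :=
  ⟨Rsd, Rsd_refl, Rsd_trans, Rsd_pareto, Rsd_convpareto, Rsd_negdom,
    Rsd_cont, Rsd_compindep, Rsd_stochdom⟩
end
end

section
/- If a preorder ≽ on Δ satisfies Pareto, Converse Pareto, and Expectationalism, then ≽ satisfies Sets of Utilities: there is a nonempty set U of mixture-preserving functions u : Δ → ℝ such that for all f, g ∈ Δ, f ≽ g if and only if u(f) ≥ u(g) for every u ∈ U. -/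
open scoped BigOperators

noncomputable section

open Lottery

/-- A mixture-preserving real-valued function on lotteries. -/
def MixPres {X : Type*} (u : Lottery X → ℝ) : Prop :=
  ∀ f g : Lottery X, ∀ α : ℝ, ∀ (h1 : 0 ≤ α) (h2 : α ≤ 1),
    u (mix α h1 h2 f g) = α * u f + (1 - α) * u g

/-- Sets of Utilities. -/
def SetsOfUtilities (R : Lottery (ℝ × ℝ) → Lottery (ℝ × ℝ) → Prop) : Prop :=
  ∃ U : Set (Lottery (ℝ × ℝ) → ℝ), U.Nonempty ∧ (∀ u ∈ U, MixPres u) ∧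
    ∀ f g : Lottery (ℝ × ℝ), (R f g ↔ ∀ u ∈ U, u g ≤ u f)


lemma mix_sum (α : ℝ) (h1 : 0 ≤ α) (h2 : α ≤ 1) (f g : Lottery (ℝ × ℝ)) (c : ℝ × ℝ → ℝ) :
    (mix α h1 h2 f g).val.sum (fun o p => p * c o)
      = α * f.val.sum (fun o p => p * c o) + (1 - α) * g.val.sum (fun o p => p * c o) := by
  show (α • f.val + (1 - α) • g.val).sum (fun o p => p * c o) = _
  rw [Finsupp.sum_add_index' (fun o => zero_mul (c o)) (fun o p q => add_mul p q (c o))]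
  rw [Finsupp.sum_smul_index (fun o => zero_mul (c o)),
      Finsupp.sum_smul_index (fun o => zero_mul (c o))]
  rw [Finsupp.mul_sum, Finsupp.mul_sum]
  simp [mul_assoc]

lemma expLot_mix (α : ℝ) (h1 : 0 ≤ α) (h2 : α ≤ 1) (f g : Lottery (ℝ × ℝ)) :
    expLot (mix α h1 h2 f g)
      = (α * (expLot f).1 + (1 - α) * (expLot g).1,
         α * (expLot f).2 + (1 - α) * (expLot g).2) := by
  unfold expLot
  rw [mix_sum α h1 h2 f g (fun o => o.1), mix_sum α h1 h2 f g (fun o => o.2)]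

lemma expLot_delta (o : ℝ × ℝ) : expLot (delta o) = o := by
  unfold expLot delta
  simp [Finsupp.sum_single_index]

/-- A preorder on Δ satisfying Pareto, Converse Pareto, and
Expectationalism satisfies Sets of Utilities. -/
theorem statement12 (R : Lottery (ℝ × ℝ) → Lottery (ℝ × ℝ) → Prop)
    (hrefl : Reflexive R) (htrans : Transitive R)
    (hP : Pareto R) (hCP : ConvPareto R) (hE : Expectationalism R) :
    SetsOfUtilities R := by
  classical
  set u1 : Lottery (ℝ × ℝ) → ℝ := fun f => (expLot f).1 with hu1
  set u2 : Lottery (ℝ × ℝ) → ℝ := fun f => (expLot f).2 with hu2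
  refine ⟨{u1, u2}, ⟨u1, by simp⟩, ?_, ?_⟩
  · rintro u (rfl | rfl) <;>
    · intro f g α h1 h2
      simp [hu1, hu2, expLot_mix α h1 h2 f g]
  · intro f g
    constructor
    · intro hfg
      have h1 := hE f
      have h2 := hE g
      have h3 : R (delta (expLot f)) (delta (expLot g)) :=
        htrans (htrans h1.2 hfg) h2.1
      have h4 := hCP (expLot f).1 (expLot f).2 (expLot g).1 (expLot g).2 (by simpa using h3)
      rintro u (rfl | rfl)
      · exact h4.1
      · exact h4.2
    · intro hu
      have h1 : u1 g ≤ u1 f := hu u1 (by simp)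
      have h2 : u2 g ≤ u2 f := hu u2 (by simp)
      have h3 : R (delta (expLot f)) (delta (expLot g)) := by
        have := hP (expLot f).1 (expLot f).2 (expLot g).1 (expLot g).2 h1 h2
        simpa using this
      exact htrans (htrans (hE f).1 h3) (hE g).2
end
end
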